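/- Let b1, b2, b3 be pairwise distinct real numbers with b1 + b2 + b3 = 0 and b1^2 + b2^2 + b3^2 = 2/3, all nonzero. Suppose real numbers C1, C2, C3 and a symmetric array T (with T_{ijk} invariant under all permutations of distinct indices i, j, k from {1,2,3}) satisfy b_k * T_{ijk} = -(4/3) * (C1*C2*C3)/(b1*b2*b3) for every permutation (i,j,k) of (1,2,3). Then T_{123} = 0 and C1*C2*C3 = 0. -/

import Mathlib

/-!
Evaluating `b k * T i j k = c` at the two cyclic shifts `(1,2,0)` and `(2,0,1)` of `(0,1,2)`, where
`T` takes the same value `t`, gives `b 0 * t = c = b 1 * t`; since `b 0 ≠ b 1`, `t = 0` and so `c = 0`.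
-/

lemma Fin3.apply_cycle_eq_of_perm_invariant {α : Type*} {T : Fin 3 → Fin 3 → Fin 3 → α}
    (hT : ∀ (i j k : Fin 3) (σ : Equiv.Perm (Fin 3)), T (σ i) (σ j) (σ k) = T i j k) :
    T 1 2 0 = T 0 1 2 ∧ T 2 0 1 = T 0 1 2 :=
  ⟨hT 0 1 2 (finRotate 3), hT 0 1 2 (finRotate 3 * finRotate 3)⟩

lemma Fin3.perm_invariant_eq_zero_of_mul_eq {M₀ : Type*} [MonoidWithZero M₀] [IsRightCancelMulZero M₀]
    {b : Fin 3 → M₀} {T : Fin 3 → Fin 3 → Fin 3 → M₀} {c : M₀} (hb : b 0 ≠ b 1)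
    (hTsym : ∀ (i j k : Fin 3) (σ : Equiv.Perm (Fin 3)), T (σ i) (σ j) (σ k) = T i j k)
    (hT : ∀ i j k : Fin 3, i ≠ j → j ≠ k → i ≠ k → b k * T i j k = c) :
    T 0 1 2 = 0 ∧ c = 0 := by
  obtain ⟨h120, h201⟩ := Fin3.apply_cycle_eq_of_perm_invariant hTsym
  have h0 : b 0 * T 0 1 2 = c := h120 ▸ hT 1 2 0 (by decide) (by decide) (by decide)
  have h1 : b 1 * T 0 1 2 = c := h201 ▸ hT 2 0 1 (by decide) (by decide) (by decide)
  have ht : T 0 1 2 = 0 := ((mul_eq_mul_right_iff.mp (h0.trans h1.symm)).resolve_left hb)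
  exact ⟨ht, by rw [← h0, ht, mul_zero]⟩

theorem stmt_12_general (b C : Fin 3 → ℝ)
    (hdist : ∀ i j, i ≠ j → b i ≠ b j)
    (hnz : ∀ i, b i ≠ 0)
    (T : Fin 3 → Fin 3 → Fin 3 → ℝ)
    (hTsym : ∀ (i j k : Fin 3) (σ : Equiv.Perm (Fin 3)),
      T (σ i) (σ j) (σ k) = T i j k)
    (hT : ∀ i j k : Fin 3, i ≠ j → j ≠ k → i ≠ k →
      b k * T i j k = -(4/3) * (C 0 * C 1 * C 2) / (b 0 * b 1 * b 2)) :
    T 0 1 2 = 0 ∧ C 0 * C 1 * C 2 = 0 := by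
  obtain ⟨ht, hc⟩ := Fin3.perm_invariant_eq_zero_of_mul_eq (hdist 0 1 (by decide)) hTsym hT
  exact ⟨ht, by simpa [hnz] using hc⟩

theorem stmt_12 (b C : Fin 3 → ℝ)
    (hdist : ∀ i j, i ≠ j → b i ≠ b j)
    (hsum : b 0 + b 1 + b 2 = 0)
    (hsq : (b 0)^2 + (b 1)^2 + (b 2)^2 = 2/3)
    (hnz : ∀ i, b i ≠ 0)
    (T : Fin 3 → Fin 3 → Fin 3 → ℝ)
    (hTsym : ∀ (i j k : Fin 3) (σ : Equiv.Perm (Fin 3)),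
      T (σ i) (σ j) (σ k) = T i j k)
    (hT : ∀ i j k : Fin 3, i ≠ j → j ≠ k → i ≠ k →
      b k * T i j k = -(4/3) * (C 0 * C 1 * C 2) / (b 0 * b 1 * b 2)) :
    T 0 1 2 = 0 ∧ C 0 * C 1 * C 2 = 0 :=
  stmt_12_general b C hdist hnz T hTsym hT
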